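/- Let r > p > 1 with conjugate exponent r' of r, let m' be a measurable function on (0,1] with m'·χ_{[ε,1]} ∈ L^p for every ε ∈ (0,1], and let g ∈ AC_r. Then ‖m'·g‖_{L^p[0,1]} ≤ ‖g'‖_r · ( Σ_{n=1}^∞ 2^{−(n−1)p/r'} ∫_{2^{−n}}^{2^{−n+1}} |m'(t)|^p dt )^{1/p}. In particular, if Σ_{n=1}^∞ (2^{−n/r'} ‖m'·χ_{(2^{−n},2^{−n+1}]}‖_p)^p < ∞ then m'·g ∈ L^p[0,1]. -/

import Mathlib

/-!
Hölder's inequality on `(0, t]` gives `|g t| ≤ ‖g'‖_r t^{1/r'}`, hence `|g| ≤ ‖g'‖_r 2^{-n/r'}` on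
the dyadic interval `(2^{-(n+1)}, 2^{-n}]`. Splitting `∫ |m' g|^p` over these intervals gives the
estimate. The series of the second claim is the series of the first divided by `2^{p/r'}`, and `g`
is continuous on `[0, 1]`, so `m' g` is measurable with finite `L^p` norm.
-/

open MeasureTheory Set
open scoped ENNReal NNReal

/-- The Lebesgue measure restricted to `[0,1]`. -/
noncomputable def mu01 : Measure ℝ := volume.restrict (Set.Icc (0 : ℝ) 1)

theorem ENNReal.toReal_eq_one_sub_of_add_eq_one {a b : ℝ≥0∞} (h : a + b = 1) :
    b.toReal = 1 - a.toReal := by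
  have ha : a ≤ 1 := h ▸ le_self_add
  rw [ENNReal.eq_sub_of_add_eq' ENNReal.one_ne_top ((add_comm b a).trans h),
    ENNReal.toReal_sub_of_le ha ENNReal.one_ne_top, ENNReal.toReal_one]

theorem enorm_setIntegral_le_eLpNorm_mul_measure_rpow {α E : Type*} [MeasurableSpace α]
    [NormedAddCommGroup E] [NormedSpace ℝ E] {μ : Measure α} {s : Set α} {f : α → E}
    {r : ℝ≥0∞} (hr : 1 ≤ r) (hf : AEStronglyMeasurable f (μ.restrict s)) :
    ‖∫ x in s, f x ∂μ‖ₑ ≤ eLpNorm f r (μ.restrict s) * μ s ^ (1 - r.toReal⁻¹) := by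
  calc ‖∫ x in s, f x ∂μ‖ₑ ≤ eLpNorm f 1 (μ.restrict s) := by
        rw [eLpNorm_one_eq_lintegral_enorm]
        exact enorm_integral_le_lintegral_enorm f
    _ ≤ eLpNorm f r (μ.restrict s) * μ.restrict s univ ^ (1 / (1 : ℝ≥0∞).toReal - 1 / r.toReal) :=
        eLpNorm_le_eLpNorm_mul_rpow_measure_univ hr hf
    _ = eLpNorm f r (μ.restrict s) * μ s ^ (1 - r.toReal⁻¹) := by
        rw [Measure.restrict_apply_univ, ENNReal.toReal_one, div_one, one_div]

theorem eLpNorm_le_mul_rpow_of_lintegral_le {α E : Type*} [MeasurableSpace α]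
    [NormedAddCommGroup E] {μ : Measure α} {f : α → E} {p : ℝ≥0∞} (hp0 : p ≠ 0) (hp : p ≠ ∞)
    {A S : ℝ≥0∞} (h : ∫⁻ x, ‖f x‖ₑ ^ p.toReal ∂μ ≤ A ^ p.toReal * S) :
    eLpNorm f p μ ≤ A * S ^ (1 / p.toReal) := by
  have hpos : 0 < p.toReal := ENNReal.toReal_pos hp0 hp
  rw [eLpNorm_eq_lintegral_rpow_enorm_toReal hp0 hp]
  calc (∫⁻ x, ‖f x‖ₑ ^ p.toReal ∂μ) ^ (1 / p.toReal)
      ≤ (A ^ p.toReal * S) ^ (1 / p.toReal) := by gcongr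
    _ = A * S ^ (1 / p.toReal) := by
        rw [ENNReal.mul_rpow_of_nonneg _ _ (by positivity), ← ENNReal.rpow_mul,
          mul_one_div_cancel hpos.ne', ENNReal.rpow_one]

theorem eLpNorm_indicator_rpow_eq_setLIntegral {α E : Type*} [MeasurableSpace α]
    [NormedAddCommGroup E] {μ : Measure α} {f : α → E} {s : Set α} (hs : MeasurableSet s)
    {p : ℝ≥0∞} (hp0 : p ≠ 0) (hp : p ≠ ∞) :
    eLpNorm (s.indicator f) p μ ^ p.toReal = ∫⁻ x in s, ‖f x‖ₑ ^ p.toReal ∂μ := by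
  rw [eLpNorm_indicator_eq_eLpNorm_restrict hs, eLpNorm_eq_lintegral_rpow_enorm_toReal hp0 hp,
    ← ENNReal.rpow_mul, one_div_mul_cancel (ENNReal.toReal_pos hp0 hp).ne', ENNReal.rpow_one]

theorem setLIntegral_enorm_mul_rpow_le {α 𝕜 : Type*} [MeasurableSpace α] [NormedRing 𝕜]
    [NormMulClass 𝕜] [MeasurableSpace 𝕜] [OpensMeasurableSpace 𝕜] {μ : Measure α} {s : Set α}
    (hs : MeasurableSet s) {f g : α → 𝕜} (hf : Measurable f) {C : ℝ≥0∞}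
    (hg : ∀ x ∈ s, ‖g x‖ₑ ≤ C) {p : ℝ} (hp : 0 ≤ p) :
    ∫⁻ x in s, ‖f x * g x‖ₑ ^ p ∂μ ≤ C ^ p * ∫⁻ x in s, ‖f x‖ₑ ^ p ∂μ := by
  rw [← lintegral_const_mul _ (hf.enorm.pow_const p)]
  refine setLIntegral_mono' hs fun x hx => ?_
  rw [enorm_mul, ENNReal.mul_rpow_of_nonneg _ _ hp, mul_comm]
  gcongr
  exact hg x hx

theorem continuousOn_of_eq_setIntegral_Ioc {E : Type*} [NormedAddCommGroup E] [NormedSpace ℝ E]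
    {f F : ℝ → E} {a b : ℝ} (hab : a ≤ b) (hf : IntegrableOn f (Icc a b))
    (hF : ∀ t ∈ Icc a b, F t = ∫ s in Ioc a t, f s) : ContinuousOn F (Icc a b) := by
  rw [← uIcc_of_le hab] at hf ⊢
  refine (intervalIntegral.continuousOn_primitive_interval hf).congr fun t ht => ?_
  rw [uIcc_of_le hab] at ht
  exact (hF t ht).trans (intervalIntegral.integral_of_le ht.1).symm

theorem mu01_eq_restrict_Ioc : mu01 = volume.restrict (Ioc 0 1) :=
  Measure.restrict_congr_set Ioc_ae_eq_Icc.symm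

instance : IsFiniteMeasure mu01 := by
  unfold mu01; infer_instance

theorem enorm_setIntegral_Ioc_le {E : Type*} [NormedAddCommGroup E] [NormedSpace ℝ E]
    {f : ℝ → E} {r : ℝ≥0∞} (hr : 1 ≤ r) (hf : AEStronglyMeasurable f mu01) {t : ℝ}
    (ht : t ∈ Icc (0 : ℝ) 1) :
    ‖∫ s in Ioc 0 t, f s‖ₑ ≤ eLpNorm f r mu01 * ENNReal.ofReal t ^ (1 - r.toReal⁻¹) := by
  have hle : volume.restrict (Ioc 0 t) ≤ mu01 :=
    Measure.restrict_mono (Ioc_subset_Icc_self.trans (Icc_subset_Icc_right ht.2)) le_rfl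
  calc ‖∫ s in Ioc 0 t, f s‖ₑ
      ≤ eLpNorm f r (volume.restrict (Ioc 0 t)) * volume (Ioc 0 t) ^ (1 - r.toReal⁻¹) :=
        enorm_setIntegral_le_eLpNorm_mul_measure_rpow hr (hf.mono_measure hle)
    _ ≤ eLpNorm f r mu01 * ENNReal.ofReal t ^ (1 - r.toReal⁻¹) := by
        rw [Real.volume_Ioc, sub_zero]
        gcongr

/-- The paper's `n`-th dyadic interval is `dyadicIoc (n - 1)`. -/
def dyadicIoc (n : ℕ) : Set ℝ := Ioc ((2 : ℝ) ^ (-((n : ℝ) + 1))) ((2 : ℝ) ^ (-(n : ℝ)))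

theorem measurableSet_dyadicIoc (n : ℕ) : MeasurableSet (dyadicIoc n) := measurableSet_Ioc

theorem dyadicIoc_subset_Ioc (n : ℕ) : dyadicIoc n ⊆ Ioc 0 1 := fun _ hx =>
  ⟨(Real.rpow_pos_of_pos two_pos _).trans hx.1, hx.2.trans <|
    Real.rpow_le_one_of_one_le_of_nonpos one_le_two (neg_nonpos.2 n.cast_nonneg)⟩

theorem pairwise_disjoint_dyadicIoc : Pairwise (Function.onFun Disjoint dyadicIoc) := by
  have hanti : Antitone fun n : ℕ => (2 : ℝ) ^ (-(n : ℝ)) := fun m n hmn =>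
    Real.rpow_le_rpow_of_exponent_le one_le_two (neg_le_neg (Nat.cast_le.2 hmn))
  convert hanti.pairwise_disjoint_on_Ioc_succ using 3 with n
  simp [dyadicIoc]

theorem iUnion_dyadicIoc : ⋃ n, dyadicIoc n = Ioc 0 1 := by
  refine (iUnion_subset dyadicIoc_subset_Ioc).antisymm fun t ht => mem_iUnion.2 ?_
  have hlog : 0 ≤ -Real.logb 2 t := neg_nonneg.2 (Real.logb_nonpos one_lt_two ht.1.le ht.2)
  refine ⟨⌊-Real.logb 2 t⌋₊, ?_, ?_⟩
  · rw [← Real.lt_logb_iff_rpow_lt one_lt_two ht.1]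
    linarith [Nat.lt_floor_add_one (-Real.logb 2 t)]
  · rw [← Real.logb_le_iff_le_rpow one_lt_two ht.1]
    linarith [Nat.floor_le hlog]

theorem lintegral_mu01_eq_tsum_dyadicIoc (F : ℝ → ℝ≥0∞) :
    ∫⁻ t, F t ∂mu01 = ∑' n, ∫⁻ t in dyadicIoc n, F t := by
  rw [mu01_eq_restrict_Ioc, ← iUnion_dyadicIoc]
  exact lintegral_iUnion measurableSet_dyadicIoc pairwise_disjoint_dyadicIoc F

theorem lintegral_enorm_mul_rpow_le_tsum_dyadicIoc {𝕜 : Type*} [NormedRing 𝕜] [NormMulClass 𝕜]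
    [MeasurableSpace 𝕜] [OpensMeasurableSpace 𝕜] {f g : ℝ → 𝕜} (hf : Measurable f) {A : ℝ≥0∞}
    {c p : ℝ} (hc : 0 ≤ c) (hp : 0 ≤ p)
    (hg : ∀ t ∈ Ioc (0 : ℝ) 1, ‖g t‖ₑ ≤ A * ENNReal.ofReal t ^ c) :
    ∫⁻ t, ‖f t * g t‖ₑ ^ p ∂mu01 ≤ A ^ p *
      ∑' n : ℕ, ENNReal.ofReal ((2 : ℝ) ^ (-(n : ℝ) * p * c)) *
        ∫⁻ t in dyadicIoc n, ‖f t‖ₑ ^ p := by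
  rw [lintegral_mu01_eq_tsum_dyadicIoc, ← ENNReal.tsum_mul_left]
  refine ENNReal.tsum_le_tsum fun n => ?_
  have hg_dyadic : ∀ t ∈ dyadicIoc n, ‖g t‖ₑ ≤ A * ENNReal.ofReal ((2 : ℝ) ^ (-(n : ℝ))) ^ c :=
    fun t ht => (hg t (dyadicIoc_subset_Ioc n ht)).trans (by gcongr; exact ht.2)
  have hweight : (A * ENNReal.ofReal ((2 : ℝ) ^ (-(n : ℝ))) ^ c) ^ p =
      A ^ p * ENNReal.ofReal ((2 : ℝ) ^ (-(n : ℝ) * p * c)) := by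
    rw [ENNReal.mul_rpow_of_nonneg _ _ hp, ← ENNReal.rpow_mul,
      ENNReal.ofReal_rpow_of_pos (by positivity), ← Real.rpow_mul zero_le_two]
    ring_nf
  rw [← mul_assoc, ← hweight]
  exact setLIntegral_enorm_mul_rpow_le (measurableSet_dyadicIoc n) hf hg_dyadic hp

theorem tsum_dyadicIoc_eq_mul_tsum_eLpNorm {E : Type*} [NormedAddCommGroup E] (f : ℝ → E)
    {p : ℝ≥0∞} (hp0 : p ≠ 0) (hp : p ≠ ∞) (c : ℝ) :
    ∑' n : ℕ, ENNReal.ofReal ((2 : ℝ) ^ (-(n : ℝ) * p.toReal * c)) *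
        ∫⁻ t in dyadicIoc n, ‖f t‖ₑ ^ p.toReal =
      ENNReal.ofReal ((2 : ℝ) ^ (p.toReal * c)) * ∑' n : ℕ,
        (ENNReal.ofReal ((2 : ℝ) ^ (-((n : ℝ) + 1) * c)) *
          eLpNorm ((dyadicIoc n).indicator f) p mu01) ^ p.toReal := by
  rw [← ENNReal.tsum_mul_left]
  congr 1 with n
  rw [ENNReal.mul_rpow_of_nonneg _ _ ENNReal.toReal_nonneg,
    eLpNorm_indicator_rpow_eq_setLIntegral (measurableSet_dyadicIoc n) hp0 hp, mu01,
    Measure.restrict_restrict_of_subset ((dyadicIoc_subset_Ioc n).trans Ioc_subset_Icc_self),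
    ENNReal.ofReal_rpow_of_pos (by positivity), ← Real.rpow_mul zero_le_two, ← mul_assoc,
    ← ENNReal.ofReal_mul (by positivity), ← Real.rpow_add two_pos]
  ring_nf

theorem eLpNorm_deriv_mul_le_general
    (p r q : ℝ≥0∞) (hp : 1 < p) (hpr : p < r) (hq : r⁻¹ + q⁻¹ = 1)
    (m' : ℝ → ℂ) (hm'meas : Measurable m')
    (g g' : ℝ → ℂ) (hg' : MemLp g' r mu01)
    (hg : ∀ t ∈ Set.Icc (0 : ℝ) 1, g t = ∫ s in Set.Ioc (0 : ℝ) t, g' s) :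
    eLpNorm (fun t => m' t * g t) p mu01 ≤
      eLpNorm g' r mu01 *
        (∑' n : ℕ,
          ENNReal.ofReal ((2 : ℝ) ^ (-(n : ℝ) * p.toReal * (q⁻¹).toReal)) *
            ∫⁻ t in Set.Ioc ((2 : ℝ) ^ (-((n : ℝ) + 1))) ((2 : ℝ) ^ (-(n : ℝ))),
              (‖m' t‖₊ : ℝ≥0∞) ^ p.toReal) ^ (1 / p.toReal) ∧
    ((∑' n : ℕ,
        (ENNReal.ofReal ((2 : ℝ) ^ (-((n : ℝ) + 1) * (q⁻¹).toReal)) *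
          eLpNorm ((Set.Ioc ((2 : ℝ) ^ (-((n : ℝ) + 1))) ((2 : ℝ) ^ (-(n : ℝ)))).indicator m')
            p mu01) ^ p.toReal < ⊤) →
      MemLp (fun t => m' t * g t) p mu01) := by
  have hp0 : p ≠ 0 := (zero_lt_one.trans hp).ne'
  have hp_top : p ≠ ∞ := hpr.ne_top
  have hr : 1 ≤ r := (hp.trans hpr).le
  have hg_le (t : ℝ) (ht : t ∈ Ioc (0 : ℝ) 1) :
      ‖g t‖ₑ ≤ eLpNorm g' r mu01 * ENNReal.ofReal t ^ (q⁻¹).toReal := by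
    rw [hg t (Ioc_subset_Icc_self ht), ENNReal.toReal_eq_one_sub_of_add_eq_one hq,
      ENNReal.toReal_inv]
    exact enorm_setIntegral_Ioc_le hr hg'.1 (Ioc_subset_Icc_self ht)
  have hbound := eLpNorm_le_mul_rpow_of_lintegral_le hp0 hp_top
    (lintegral_enorm_mul_rpow_le_tsum_dyadicIoc hm'meas ENNReal.toReal_nonneg
      ENNReal.toReal_nonneg hg_le)
  refine ⟨hbound, fun hsum => ⟨?_, hbound.trans_lt ?_⟩⟩
  · have hg_cont : ContinuousOn g (Icc 0 1) :=
      continuousOn_of_eq_setIntegral_Ioc zero_le_one (hg'.integrable hr) hg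
    exact hm'meas.aestronglyMeasurable.mul (hg_cont.aestronglyMeasurable measurableSet_Icc)
  · rw [tsum_dyadicIoc_eq_mul_tsum_eLpNorm m' hp0 hp_top]
    exact ENNReal.mul_lt_top hg'.eLpNorm_lt_top (ENNReal.rpow_lt_top_of_nonneg (by positivity)
      (ENNReal.mul_ne_top ENNReal.ofReal_ne_top hsum.ne))

/-- key estimate in Theorem 6.  Let `r > p > 1` with `q = r'`
the conjugate exponent of `r`, let `m'` be measurable with `m'·χ_{[ε,1]} ∈ L^p`
for every `ε ∈ (0,1]`, and let `g ∈ AC_r` with derivative `g'`.  Then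
`‖m' g‖_p ≤ ‖g'‖_r (Σ_{n≥1} 2^{−(n−1)p/r'} ∫_{2^{−n}}^{2^{−n+1}} |m'|^p)^{1/p}`
(the sum below is indexed by `n : ℕ` corresponding to the paper's `n − 1`).
In particular, if `Σ_{n≥1} (2^{−n/r'} ‖m'·χ_{(2^{−n},2^{−n+1}]}‖_p)^p < ∞`
then `m' g ∈ L^p[0,1]`. -/
theorem eLpNorm_deriv_mul_le
    (p r q : ℝ≥0∞) (hp : 1 < p) (hpr : p < r) (hq : r⁻¹ + q⁻¹ = 1)
    (m' : ℝ → ℂ) (hm'meas : Measurable m')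
    (hm'p : ∀ ε ∈ Set.Ioc (0 : ℝ) 1, MemLp ((Set.Icc ε 1).indicator m') p mu01)
    (g g' : ℝ → ℂ) (hg' : MemLp g' r mu01)
    (hg : ∀ t ∈ Set.Icc (0 : ℝ) 1, g t = ∫ s in Set.Ioc (0 : ℝ) t, g' s) :
    eLpNorm (fun t => m' t * g t) p mu01 ≤
      eLpNorm g' r mu01 *
        (∑' n : ℕ,
          ENNReal.ofReal ((2 : ℝ) ^ (-(n : ℝ) * p.toReal * (q⁻¹).toReal)) *
            ∫⁻ t in Set.Ioc ((2 : ℝ) ^ (-((n : ℝ) + 1))) ((2 : ℝ) ^ (-(n : ℝ))),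
              (‖m' t‖₊ : ℝ≥0∞) ^ p.toReal) ^ (1 / p.toReal) ∧
    ((∑' n : ℕ,
        (ENNReal.ofReal ((2 : ℝ) ^ (-((n : ℝ) + 1) * (q⁻¹).toReal)) *
          eLpNorm ((Set.Ioc ((2 : ℝ) ^ (-((n : ℝ) + 1))) ((2 : ℝ) ^ (-(n : ℝ)))).indicator m')
            p mu01) ^ p.toReal < ⊤) →
      MemLp (fun t => m' t * g t) p mu01) :=
  eLpNorm_deriv_mul_le_general p r q hp hpr hq m' hm'meas g g' hg' hg
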